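/- arXiv:0908.3130 — 5 statements merged into one kernel-verified Lean document; each statement's English description precedes it below -/
import Mathlib

section
/- Let F be a totally real number field with ring of integers O, let n ≥ 1, and let α ∈ F be totally positive. Then the minimum of f_α on O^n∖{0} equals the minimum of the scaled trace form φ_α on O∖{0}; in particular m(f_α) = Tr_{F/ℚ}(α η²) for every minimal vector η of φ_α. -/
/-!
Since `2 A_n(x) = (∑ xᵢ)² + ∑ xᵢ²`, we have `2 f_α(x) = φ_α(∑ xᵢ) + ∑ φ_α(xᵢ)`. For `x ≠ 0`, either
`∑ xᵢ ≠ 0` and some `xᵢ ≠ 0`, or at least two coordinates are nonzero; as `φ_α ≥ 0`, both cases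
give `2 f_α(x) ≥ 2 m(φ_α)`, with equality at `(η, 0, …, 0)` for a minimal vector `η`. The minimum
`m(φ_α)` exists because `φ_α` is positive away from `0` (the trace of a totally positive element
is positive) and takes values in `d⁻¹ ℤ` for any `d` with `d α` integral.
-/

open NumberField

/-- The scaled trace form `φ_α : 𝓞 F → ℚ`, `φ_α(η) = Tr_{F/ℚ}(α η²)`. -/
noncomputable def scaledTraceForm (F : Type*) [Field F] [NumberField F] (α : F)
    (η : RingOfIntegers F) : ℚ :=
  Algebra.trace ℚ F (α * (η : F) * (η : F))

/-- The `n`-ary form `f_α(x₁,…,xₙ) = Tr_{F/ℚ}(α · A_n(x₁,…,xₙ))` on `(𝓞 F)ⁿ`. -/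
noncomputable def fAlpha (F : Type*) [Field F] [NumberField F] (n : ℕ) (α : F)
    (v : Fin n → RingOfIntegers F) : ℚ :=
  Algebra.trace ℚ F (α * ∑ i, ∑ j ∈ Finset.Ici i, (v i : F) * (v j : F))

theorem two_mul_sum_sum_Ici_mul {ι R : Type*} [Fintype ι] [LinearOrder ι]
    [LocallyFiniteOrderTop ι] [CommSemiring R] (a : ι → R) :
    2 * ∑ i, ∑ j ∈ Finset.Ici i, a i * a j = (∑ i, a i) * (∑ i, a i) + ∑ i, a i * a i := by
  classical
  have hIci (i : ι) : ∑ j ∈ Finset.Ici i, a i * a j = ∑ j, if i ≤ j then a i * a j else 0 := by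
    rw [← Finset.sum_filter, Finset.filter_le_eq_Ici]
  have hIic : ∑ i, ∑ j ∈ Finset.Ici i, a i * a j = ∑ i, ∑ j, if j ≤ i then a i * a j else 0 := by
    rw [Finset.sum_congr rfl fun i _ => hIci i, Finset.sum_comm]
    exact Finset.sum_congr rfl fun i _ => Finset.sum_congr rfl fun j _ => by rw [mul_comm]
  have hpair (i j : ι) : ((if i ≤ j then a i * a j else 0) + if j ≤ i then a i * a j else 0)
      = a i * a j + if i = j then a i * a j else 0 := by
    rcases lt_trichotomy i j with h | rfl | h
    · simp [h.le, h.not_ge, h.ne]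
    · simp
    · simp [h.le, h.not_ge, h.ne']
  calc 2 * ∑ i, ∑ j ∈ Finset.Ici i, a i * a j
      = ∑ i, ∑ j, (a i * a j + if i = j then a i * a j else 0) := by
        simp_rw [← hpair, Finset.sum_add_distrib, ← hIci, ← hIic, two_mul]
    _ = (∑ i, a i) * (∑ i, a i) + ∑ i, a i * a i := by
        simp only [Finset.sum_add_distrib, Finset.sum_ite_eq, Finset.mem_univ, if_true,
          Finset.sum_mul_sum]

theorem add_le_apply_sum_add_sum_apply {ι M R : Type*} [Fintype ι] [AddCommMonoid M]
    [AddCommMonoid R] [PartialOrder R] [IsOrderedAddMonoid R] {φ : M → R} {c : R}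
    (hφ : ∀ x, 0 ≤ φ x) (hc : ∀ x, x ≠ 0 → c ≤ φ x) {v : ι → M} (hv : v ≠ 0) :
    c + c ≤ φ (∑ i, v i) + ∑ i, φ (v i) := by
  classical
  obtain ⟨i, hi⟩ : ∃ i, v i ≠ 0 := Function.ne_iff.mp hv
  by_cases hsum : ∑ i, v i = 0
  · obtain ⟨j, hji, hj⟩ : ∃ j, j ≠ i ∧ v j ≠ 0 := by
      by_contra! hrest
      refine hi ?_
      rw [← Finset.sum_eq_single_of_mem i (Finset.mem_univ i) fun j _ hj => hrest j hj, hsum]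
    calc c + c ≤ φ (v i) + φ (v j) := add_le_add (hc _ hi) (hc _ hj)
      _ = ∑ k ∈ {i, j}, φ (v k) := (Finset.sum_pair (f := fun k => φ (v k)) hji.symm).symm
      _ ≤ ∑ k, φ (v k) := Finset.sum_le_univ_sum_of_nonneg fun k => hφ _
      _ ≤ φ (∑ i, v i) + ∑ i, φ (v i) := le_add_of_nonneg_left (hφ _)
  · exact add_le_add (hc _ hsum)
      ((hc _ hi).trans (Finset.single_le_sum (fun k _ => hφ (v k)) (Finset.mem_univ i)))

theorem exists_isLeast_of_forall_mul_eq_intCast {K : Type*} [Field K] [LinearOrder K]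
    [IsStrictOrderedRing K] {S : Set K} (hne : S.Nonempty) (hS : ∀ q ∈ S, 0 ≤ q) {d : K}
    (hd : 0 < d) (hint : ∀ q ∈ S, ∃ k : ℤ, d * q = k) : ∃ c, IsLeast S c := by
  obtain ⟨q, hq⟩ := hne
  obtain ⟨k, hk⟩ := hint q hq
  obtain ⟨_, ⟨c, hc, hcd⟩, hmin⟩ := Int.exists_least_of_bdd
    (P := fun k : ℤ => ∃ q ∈ S, d * q = k)
    ⟨0, fun _ ⟨q, hq, hk⟩ => by exact_mod_cast hk ▸ mul_nonneg hd.le (hS q hq)⟩ ⟨k, q, hq, hk⟩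
  refine ⟨c, hc, fun q hq => ?_⟩
  obtain ⟨k, hk⟩ := hint q hq
  have : d * c ≤ d * q := by
    rw [hcd, hk]; exact_mod_cast hmin k ⟨q, hq, hk⟩
  exact le_of_mul_le_mul_left this hd

namespace NumberField

variable {F : Type*} [Field F] [NumberField F]

theorem IsTotallyReal.trace_pos [IsTotallyReal F] {β : F}
    (hβ : ∀ σ : F →+* ℝ, 0 < σ β) : 0 < Algebra.trace ℚ F β := by
  have hsum : ((Algebra.trace ℚ F β : ℚ) : ℂ) = ∑ σ : F →ₐ[ℚ] ℂ, σ β :=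
    (eq_ratCast (algebraMap ℚ ℂ) _).symm.trans (trace_eq_sum_embeddings ℂ)
  have hre (σ : F →ₐ[ℚ] ℂ) : 0 < (σ β).re := by
    have hσ := IsTotallyReal.complexEmbedding_isReal (σ : F →+* ℂ)
    rw [← AlgHom.coe_toRingHom, ← hσ.coe_embedding_apply, Complex.ofReal_re]
    exact hβ _
  have : Nonempty (F →ₐ[ℚ] ℂ) := ⟨IsAlgClosed.lift⟩
  have htrace := congrArg Complex.re hsum
  rw [Complex.re_sum, Complex.ratCast_re] at htrace
  exact_mod_cast htrace ▸ Finset.sum_pos (fun σ _ => hre σ) Finset.univ_nonempty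

theorem exists_nat_mul_mem_ringOfIntegers (α : F) :
    ∃ d : ℕ, 0 < d ∧ ∃ β : 𝓞 F, (d : F) * α = β := by
  obtain ⟨y, hy, hint⟩ := ((IsFractionRing.isAlgebraic_iff ℤ ℚ F).mpr
    (Algebra.IsAlgebraic.isAlgebraic α)).exists_integral_multiple
  refine ⟨y.natAbs, Int.natAbs_pos.mpr hy, ⟨_, hint.smul y.sign⟩, ?_⟩
  change _ = y.sign • y • α
  rw [smul_smul, Int.sign_mul_self_eq_natAbs, natCast_zsmul, nsmul_eq_mul]

theorem exists_nat_mul_trace_mul_eq_intCast (α : F) :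
    ∃ d : ℕ, 0 < d ∧ ∀ x : 𝓞 F, ∃ k : ℤ, d * Algebra.trace ℚ F (α * x) = k := by
  obtain ⟨d, hd, β, hβ⟩ := exists_nat_mul_mem_ringOfIntegers α
  refine ⟨d, hd, fun x => ⟨Algebra.trace ℤ (𝓞 F) (β * x), ?_⟩⟩
  rw [Algebra.coe_trace_int]
  change _ = Algebra.trace ℚ F ((β : F) * x)
  rw [← hβ, mul_assoc, ← nsmul_eq_mul, ← nsmul_eq_mul, map_nsmul]

end NumberField

section ScaledTraceForm

variable {F : Type*} [Field F] [NumberField F] {α : F}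

theorem scaledTraceForm_zero (α : F) : scaledTraceForm F α 0 = 0 := by
  simp [scaledTraceForm]

theorem scaledTraceForm_pos [IsTotallyReal F] (hα : ∀ σ : F →+* ℝ, 0 < σ α)
    {η : 𝓞 F} (hη : η ≠ 0) : 0 < scaledTraceForm F α η := by
  refine IsTotallyReal.trace_pos fun σ => ?_
  rw [map_mul, map_mul, mul_assoc]
  exact mul_pos (hα σ) (mul_self_pos.mpr ((map_ne_zero σ).mpr (by exact_mod_cast hη)))

theorem scaledTraceForm_nonneg [IsTotallyReal F] (hα : ∀ σ : F →+* ℝ, 0 < σ α)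
    (η : 𝓞 F) : 0 ≤ scaledTraceForm F α η := by
  rcases eq_or_ne η 0 with rfl | hη
  · exact (scaledTraceForm_zero α).ge
  · exact (scaledTraceForm_pos hα hη).le

theorem exists_isLeast_scaledTraceForm [IsTotallyReal F] (hα : ∀ σ : F →+* ℝ, 0 < σ α) :
    ∃ c, IsLeast {q : ℚ | ∃ η : 𝓞 F, η ≠ 0 ∧ scaledTraceForm F α η = q} c := by
  obtain ⟨d, hd, hint⟩ := exists_nat_mul_trace_mul_eq_intCast α
  refine exists_isLeast_of_forall_mul_eq_intCast ⟨_, 1, one_ne_zero, rfl⟩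
    (fun q ⟨η, _, hq⟩ => hq ▸ scaledTraceForm_nonneg hα η) (Nat.cast_pos.mpr hd)
    fun q ⟨η, _, hq⟩ => ?_
  rw [← hq, scaledTraceForm, mul_assoc, ← algebraMap.coe_mul]
  exact hint _

theorem two_mul_fAlpha (n : ℕ) (α : F) (v : Fin n → 𝓞 F) :
    2 * fAlpha F n α v = scaledTraceForm F α (∑ i, v i) + ∑ i, scaledTraceForm F α (v i) := by
  simp only [fAlpha, scaledTraceForm, ← map_sum, ← map_add, two_mul]
  congr 1
  push_cast
  have hsq : ∑ i, α * (v i : F) * v i = α * ∑ i, (v i : F) * v i := by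
    simp only [Finset.mul_sum, mul_assoc]
  linear_combination α * two_mul_sum_sum_Ici_mul (fun i => (v i : F)) - hsq

theorem fAlpha_single {n : ℕ} (α : F) (i : Fin n) (x : 𝓞 F) :
    fAlpha F n α (Pi.single i x) = scaledTraceForm F α x := by
  have h := two_mul_fAlpha n α (Pi.single i x)
  simp only [Finset.sum_pi_single', Finset.mem_univ, if_true,
    Pi.apply_single (fun _ => scaledTraceForm F α) (fun _ => scaledTraceForm_zero α)] at h
  linarith

theorem isLeast_fAlpha_of_isLeast_scaledTraceForm {n : ℕ} (hn : 1 ≤ n)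
    (hφ : ∀ η, 0 ≤ scaledTraceForm F α η) {c : ℚ}
    (hc : IsLeast {q : ℚ | ∃ η : 𝓞 F, η ≠ 0 ∧ scaledTraceForm F α η = q} c) :
    IsLeast {q : ℚ | ∃ v : Fin n → 𝓞 F, v ≠ 0 ∧ fAlpha F n α v = q} c := by
  refine ⟨?_, ?_⟩
  · obtain ⟨ξ, hξ, rfl⟩ := hc.1
    exact ⟨Pi.single ⟨0, hn⟩ ξ, by simpa using hξ, fAlpha_single α _ ξ⟩
  · rintro _ ⟨v, hv, rfl⟩
    have := add_le_apply_sum_add_sum_apply hφ (fun η hη => hc.2 ⟨η, hη, rfl⟩) hv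
    linarith [two_mul_fAlpha n α v]

end ScaledTraceForm

/-- Let `F` be a totally real number field, `n ≥ 1` and `α ∈ F` totally positive.  Then
the minimum of `f_α` on `(𝓞 F)ⁿ ∖ {0}` equals the minimum of the scaled trace form `φ_α`
on `𝓞 F ∖ {0}`; in particular `m(f_α) = Tr_{F/ℚ}(α η²)` for every minimal vector `η` of
`φ_α`. -/
theorem fAlpha_min_eq_scaledTraceForm_min
    (F : Type*) [Field F] [NumberField F]
    (hreal : ∀ v : InfinitePlace F, v.IsReal)
    (n : ℕ) (hn : 1 ≤ n)
    (α : F) (hα : ∀ σ : F →+* ℝ, 0 < σ α) :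
    ∃ c : ℚ,
      IsLeast {q : ℚ | ∃ v : Fin n → RingOfIntegers F, v ≠ 0 ∧ fAlpha F n α v = q} c ∧
      IsLeast {q : ℚ | ∃ η : RingOfIntegers F, η ≠ 0 ∧ scaledTraceForm F α η = q} c ∧
      ∀ η : RingOfIntegers F, η ≠ 0 →
        (∀ ξ : RingOfIntegers F, ξ ≠ 0 → scaledTraceForm F α η ≤ scaledTraceForm F α ξ) →
        c = Algebra.trace ℚ F (α * (η : F) * (η : F)) := by
  have : IsTotallyReal F := ⟨hreal⟩
  obtain ⟨c, hc⟩ := exists_isLeast_scaledTraceForm hα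
  refine ⟨c, isLeast_fAlpha_of_isLeast_scaledTraceForm hn (scaledTraceForm_nonneg hα) hc, hc,
    fun η hη hmin => hc.unique ⟨⟨η, hη, rfl⟩, ?_⟩⟩
  rintro _ ⟨ξ, hξ, rfl⟩
  exact hmin ξ hξ
end

section
/- Let F be a totally real number field with ring of integers O, let n ≥ 1, and let α ∈ F be totally positive. Then the set of minimal vectors of f_α on O^n is, up to sign, exactly the set {η e_i : η ∈ M(φ_α), 1 ≤ i ≤ n} ∪ {η(e_i − e_j) : η ∈ M(φ_α), 1 ≤ i < j ≤ n}, where e_1,…,e_n is the standard basis of O^n and M(φ_α) is the set of minimal vectors of the scaled trace form φ_α. -/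
/-!
Since `2Aₙ(x) = (∑ xᵢ)² + ∑ xᵢ²`, we have `2 f_α(v) = φ_α(∑ vᵢ) + ∑ φ_α(vᵢ)`, and `φ_α` is
positive definite because the trace of a totally positive element of a totally real field is a
sum of positive real conjugates. If `μ` is the minimum of `φ_α`, then for `v ≠ 0` either
`∑ vᵢ ≠ 0`, and both terms are at least `μ`, with equality only if `v` has a single nonzero
coordinate, of value `μ`; or `∑ vᵢ = 0`, so at least two coordinates are nonzero, and equality
forces exactly two, opposite to each other, of value `μ`. The test vectors `ξ eᵢ` show that a
minimal `v` has `2 f_α(v) ≤ 2 φ_α(ξ)` for all `ξ ≠ 0`, which pins `v` down in the same way.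
-/

open NumberField

/-- `η` is a minimal vector for the scaled trace form `φ_α`. -/
def IsMinVecPhi (F : Type*) [Field F] [NumberField F] (α : F) (η : RingOfIntegers F) : Prop :=
  η ≠ 0 ∧ ∀ ξ : RingOfIntegers F, ξ ≠ 0 → scaledTraceForm F α η ≤ scaledTraceForm F α ξ

/-- `v` is a minimal vector for `f_α`. -/
def IsMinVecF (F : Type*) [Field F] [NumberField F] (n : ℕ) (α : F)
    (v : Fin n → RingOfIntegers F) : Prop :=
  v ≠ 0 ∧ ∀ w : Fin n → RingOfIntegers F, w ≠ 0 → fAlpha F n α v ≤ fAlpha F n α w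

open Finset

def IsMinimalVector {M R : Type*} [Zero M] [LE R] (q : M → R) (x : M) : Prop :=
  x ≠ 0 ∧ ∀ y, y ≠ 0 → q x ≤ q y

theorem isMinimalVector_comp_iff {M R S : Type*} [Zero M] [LinearOrder R] [Preorder S]
    {g : R → S} (hg : StrictMono g) {q : M → R} {x : M} :
    IsMinimalVector (g ∘ q) x ↔ IsMinimalVector q x := by
  simp only [IsMinimalVector, Function.comp_apply, hg.le_iff_le]

structure IsEvenPosDef {M R : Type*} [AddGroup M] [Zero R] [LT R] (q : M → R) : Prop where
  map_zero : q 0 = 0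
  map_neg : ∀ x, q (-x) = q x
  pos : ∀ x, x ≠ 0 → 0 < q x

theorem IsEvenPosDef.nonneg {M R : Type*} [AddGroup M] [Zero R] [Preorder R] {q : M → R}
    (hq : IsEvenPosDef q) (x : M) : 0 ≤ q x := by
  rcases eq_or_ne x 0 with rfl | hx
  · exact hq.map_zero.ge
  · exact (hq.pos x hx).le

theorem sum_Ici_mul_mul_two {ι R : Type*} [Fintype ι] [LinearOrder ι] [LocallyFiniteOrderTop ι]
    [LocallyFiniteOrderBot ι] [CommSemiring R] (x : ι → R) :
    (∑ i, ∑ j ∈ Ici i, x i * x j) * 2 = (∑ i, x i) ^ 2 + ∑ i, x i ^ 2 := by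
  have hswap : ∑ i, ∑ j ∈ Ici i, x i * x j = ∑ i, ∑ j ∈ Iic i, x i * x j := by
    rw [sum_comm' (t' := univ) (s' := Iic) (by simp)]
    simp_rw [mul_comm]
  have hsplit : ∀ i, ∑ j ∈ Ici i, x i * x j + ∑ j ∈ Iic i, x i * x j
      = ∑ j, x i * x j + x i ^ 2 := fun i => by
    have hunion : Ici i ∪ Iic i = univ := by ext j; simp [le_total]
    have hinter : Ici i ∩ Iic i = {i} := by ext j; simp [le_antisymm_iff, and_comm]
    rw [← sum_union_inter, hunion, hinter, sum_singleton, sq]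
  rw [mul_two]
  nth_rw 2 [hswap]
  rw [← sum_add_distrib, sum_congr rfl fun i _ => hsplit i, sum_add_distrib, sq, sum_mul_sum]

theorem single_sub_single_eq_ite {ι M : Type*} [DecidableEq ι] [AddGroup M] {i j : ι}
    (hij : i ≠ j) (x : M) :
    Pi.single i x - Pi.single j x = fun k => if k = i then x else if k = j then -x else 0 := by
  funext k
  by_cases hki : k = i <;> by_cases hkj : k = j <;> simp_all

theorem exists_ne_ne_zero_of_sum_eq_zero {ι M : Type*} [Fintype ι] [AddCommMonoid M]
    {v : ι → M} (hs : ∑ k, v k = 0) {i : ι} (hi : v i ≠ 0) : ∃ j, j ≠ i ∧ v j ≠ 0 := by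
  by_contra! h
  exact hi (by rwa [sum_eq_single i (fun j _ hj => h j hj) (by simp)] at hs)

theorem IsEvenPosDef.eq_zero_of_sum_le {ι M R : Type*} [Fintype ι] [AddGroup M] [AddCommMonoid R]
    [PartialOrder R] [IsOrderedCancelAddMonoid R] {q : M → R} (hq : IsEvenPosDef q) {v : ι → M}
    {s : Finset ι} (h : ∑ k, q (v k) ≤ ∑ k ∈ s, q (v k)) {k : ι} (hk : k ∉ s) : v k = 0 := by
  by_contra hvk
  exact (sum_lt_sum_of_subset (subset_univ s) (mem_univ k) hk (hq.pos _ hvk)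
    fun j _ _ => hq.nonneg _).not_ge h

section TwoAForm

variable {ι M R : Type*} [Fintype ι] [DecidableEq ι] [AddCommGroup M] [CommRing R] {q : M → R}

def twoAForm (q : M → R) (v : ι → M) : R :=
  q (∑ i, v i) + ∑ i, q (v i)

theorem twoAForm_single (hq0 : q 0 = 0) (i : ι) (x : M) :
    twoAForm q (Pi.single i x) = 2 * q x := by
  simp [twoAForm, Pi.apply_single (fun _ => q) (fun _ => hq0), two_mul]

theorem twoAForm_single_sub_single (hq0 : q 0 = 0) (hqneg : ∀ x, q (-x) = q x) {i j : ι}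
    (hij : i ≠ j) (x : M) :
    twoAForm q (Pi.single i x - Pi.single j x) = 2 * q x := by
  have hq : ∀ k, q ((Pi.single i x : ι → M) k - (Pi.single j x : ι → M) k)
      = (Pi.single i (q x) : ι → R) k + (Pi.single j (q x) : ι → R) k := fun k => by
    by_cases hki : k = i <;> by_cases hkj : k = j <;> simp_all
  simp only [twoAForm, hq, Pi.sub_apply, sum_sub_distrib, sum_add_distrib, sum_pi_single',
    mem_univ, if_true, sub_self, hq0, zero_add, two_mul]

variable [LinearOrder R] [IsStrictOrderedRing R]

theorem IsEvenPosDef.two_mul_le_twoAForm (hq : IsEvenPosDef q) {η : M}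
    (hη : IsMinimalVector q η) {w : ι → M} (hw : w ≠ 0) : 2 * q η ≤ twoAForm q w := by
  obtain ⟨i, hi⟩ := Function.ne_iff.mp hw
  by_cases hs : ∑ k, w k = 0
  · obtain ⟨j, hji, hj⟩ := exists_ne_ne_zero_of_sum_eq_zero hs hi
    have hpair : q (w i) + q (w j) ≤ ∑ k, q (w k) := by
      rw [← sum_pair (f := fun k => q (w k)) hji.symm]
      exact sum_le_sum_of_subset_of_nonneg (subset_univ _) fun k _ _ => hq.nonneg _
    rw [twoAForm, hs, hq.map_zero]
    linarith [hη.2 _ hi, hη.2 _ hj]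
  · have hsingle : q (w i) ≤ ∑ k, q (w k) :=
      single_le_sum (fun k _ => hq.nonneg (w k)) (mem_univ i)
    rw [twoAForm]
    linarith [hη.2 _ hi, hη.2 _ hs]

theorem IsEvenPosDef.eq_single_of_twoAForm_le (hq : IsEvenPosDef q) {v : ι → M}
    (hle : ∀ ξ, ξ ≠ 0 → twoAForm q v ≤ 2 * q ξ) {i : ι} (hi : v i ≠ 0) (hs : ∑ k, v k ≠ 0) :
    v = Pi.single i (v i) := by
  have hsupp : ∑ k, q (v k) ≤ ∑ k ∈ {i}, q (v k) := by
    have h1 := hle _ hs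
    have h2 := hle _ hi
    rw [twoAForm] at h1 h2
    rw [sum_singleton]
    linarith
  funext k
  by_cases hki : k = i
  · simp [hki]
  · simp [hki, hq.eq_zero_of_sum_le hsupp (notMem_singleton.mpr hki)]

theorem IsEvenPosDef.eq_single_sub_single_of_twoAForm_le (hq : IsEvenPosDef q) {v : ι → M}
    (hle : ∀ ξ, ξ ≠ 0 → twoAForm q v ≤ 2 * q ξ) {a b : ι} (hab : a ≠ b) (ha : v a ≠ 0)
    (hb : v b ≠ 0) (hs : ∑ k, v k = 0) :
    v = Pi.single a (v a) - Pi.single b (v a) := by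
  have hQ : twoAForm q v = ∑ k, q (v k) := by rw [twoAForm, hs, hq.map_zero, zero_add]
  have hsupp : ∀ k ∉ ({a, b} : Finset ι), v k = 0 := fun k =>
    hq.eq_zero_of_sum_le (by rw [sum_pair hab]; linarith [hle _ ha, hle _ hb])
  have hvb : v b = -v a := by
    rw [← sum_subset (subset_univ _) fun k _ => hsupp k, sum_pair hab] at hs
    exact eq_neg_of_add_eq_zero_right hs
  funext k
  by_cases hka : k = a
  · simp [hka, hab]
  · by_cases hkb : k = b
    · simp [hkb, hvb, Ne.symm hab]
    · simp [hka, hkb, hsupp k (by simp [hka, hkb])]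

theorem IsEvenPosDef.isMinimalVector_twoAForm_iff [LinearOrder ι] (hq : IsEvenPosDef q)
    (v : ι → M) :
    IsMinimalVector (twoAForm q) v ↔ ∃ η, IsMinimalVector q η ∧
      ((∃ i, v = Pi.single i η) ∨ ∃ i j, i < j ∧ v = Pi.single i η - Pi.single j η) := by
  constructor
  · intro hv
    obtain ⟨i, hi⟩ := Function.ne_iff.mp hv.1
    have hle : ∀ ξ, ξ ≠ 0 → twoAForm q v ≤ 2 * q ξ := fun ξ hξ =>
      twoAForm_single hq.map_zero i ξ ▸ hv.2 _ (Pi.single_ne_zero_iff.mpr hξ)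
    have hmin : ∀ η, η ≠ 0 → twoAForm q v = 2 * q η → IsMinimalVector q η := fun η hη hvη =>
      ⟨hη, fun ξ hξ => by linarith [hle ξ hξ]⟩
    by_cases hs : ∑ k, v k = 0
    · obtain ⟨j, hji, hj⟩ := exists_ne_ne_zero_of_sum_eq_zero hs hi
      obtain ⟨a, b, hab, ha, hb⟩ : ∃ a b, a < b ∧ v a ≠ 0 ∧ v b ≠ 0 := by
        rcases hji.lt_or_gt with h | h
        exacts [⟨j, i, h, hj, hi⟩, ⟨i, j, h, hi, hj⟩]
      have hv' := hq.eq_single_sub_single_of_twoAForm_le hle hab.ne ha hb hs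
      refine ⟨v a, hmin _ ha ?_, Or.inr ⟨a, b, hab, hv'⟩⟩
      nth_rw 1 [hv']
      exact twoAForm_single_sub_single hq.map_zero hq.map_neg hab.ne _
    · have hv' := hq.eq_single_of_twoAForm_le hle hi hs
      refine ⟨v i, hmin _ hi ?_, Or.inl ⟨i, hv'⟩⟩
      nth_rw 1 [hv']
      exact twoAForm_single hq.map_zero _ _
  · rintro ⟨η, hη, ⟨i, rfl⟩ | ⟨i, j, hij, rfl⟩⟩
    · refine ⟨Pi.single_ne_zero_iff.mpr hη.1, fun w hw => ?_⟩
      rw [twoAForm_single hq.map_zero]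
      exact hq.two_mul_le_twoAForm hη hw
    · refine ⟨fun h => hη.1 (by simpa [hij.ne] using congrFun h i), fun w hw => ?_⟩
      rw [twoAForm_single_sub_single hq.map_zero hq.map_neg hij.ne]
      exact hq.two_mul_le_twoAForm hη hw

end TwoAForm

theorem trace_pos_of_forall_embedding_pos {F : Type*} [Field F] [NumberField F] [IsTotallyReal F]
    {β : F} (hβ : ∀ σ : F →+* ℝ, 0 < σ β) : 0 < Algebra.trace ℚ F β := by
  have hre : ∀ σ : F →ₐ[ℚ] ℂ, 0 < (σ β).re := fun σ => by
    have hσ := IsTotallyReal.complexEmbedding_isReal (σ : F →+* ℂ)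
    change 0 < ((σ : F →+* ℂ) β).re
    rw [← hσ.coe_embedding_apply, Complex.ofReal_re]
    exact hβ _
  have : Nonempty (F →ₐ[ℚ] ℂ) := ⟨IsAlgClosed.lift⟩
  have htr := congrArg Complex.re (trace_eq_sum_embeddings ℂ (K := ℚ) (x := β))
  rw [Complex.re_sum, eq_ratCast, Complex.ratCast_re] at htr
  exact_mod_cast htr ▸ sum_pos (fun σ _ => hre σ) univ_nonempty

theorem scaledTraceForm_isEvenPosDef (F : Type*) [Field F] [NumberField F] [IsTotallyReal F]
    (α : F) (hα : ∀ σ : F →+* ℝ, 0 < σ α) : IsEvenPosDef (scaledTraceForm F α) where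
  map_zero := by simp [scaledTraceForm]
  map_neg η := by simp [scaledTraceForm]
  pos η hη := trace_pos_of_forall_embedding_pos fun σ => by
    have : σ (η : F) ≠ 0 := by simpa using hη
    rw [map_mul, map_mul, mul_assoc]
    exact mul_pos (hα σ) (mul_self_pos.mpr this)

theorem fAlpha_mul_two (F : Type*) [Field F] [NumberField F] (n : ℕ) (α : F)
    (v : Fin n → RingOfIntegers F) :
    fAlpha F n α v * 2 = twoAForm (scaledTraceForm F α) v := by
  have hA := sum_Ici_mul_mul_two fun i => (v i : F)
  simp only [fAlpha, twoAForm, scaledTraceForm, mul_two, ← map_sum, ← map_add]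
  congr 1
  have hdiag : ∑ i, α * (v i : F) * (v i : F) = α * ∑ i, (v i : F) ^ 2 := by
    rw [mul_sum]
    exact sum_congr rfl fun _ _ => by ring
  push_cast
  rw [hdiag]
  linear_combination α * hA

theorem minVecs_fAlpha_eq_general
    (F : Type*) [Field F] [NumberField F]
    (hreal : ∀ v : InfinitePlace F, v.IsReal)
    (n : ℕ)
    (α : F) (hα : ∀ σ : F →+* ℝ, 0 < σ α) :
    ∀ v : Fin n → RingOfIntegers F,
      IsMinVecF F n α v ↔
        ∃ η : RingOfIntegers F, IsMinVecPhi F α η ∧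
          ((∃ i : Fin n, v = fun k => if k = i then η else 0) ∨
           (∃ i j : Fin n, i < j ∧
              v = fun k => if k = i then η else if k = j then -η else 0)) := by
  intro v
  have : IsTotallyReal F := ⟨hreal⟩
  have hf : IsMinVecF F n α v ↔ IsMinimalVector (twoAForm (scaledTraceForm F α)) v := by
    rw [← funext (fAlpha_mul_two F n α)]
    exact (isMinimalVector_comp_iff (strictMono_mul_right_of_pos two_pos)).symm
  rw [hf, (scaledTraceForm_isEvenPosDef F α hα).isMinimalVector_twoAForm_iff]
  refine exists_congr fun η => and_congr Iff.rfl (or_congr ?_ ?_)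
  · simp only [← Pi.single_apply]
  · exact exists_congr fun i => exists_congr fun j =>
      and_congr_right fun hij => by rw [single_sub_single_eq_ite hij.ne]

/-- Let `F` be a totally real number field, `n ≥ 1` and `α ∈ F` totally positive.  The
minimal vectors of `f_α` on `(𝓞 F)ⁿ` are, up to sign, exactly the vectors `η eᵢ` and
`η (eᵢ - eⱼ)` for `i < j`, where `η` runs over the minimal vectors of the scaled trace
form `φ_α`.  (Both sides are closed under `v ↦ -v`, so this is a plain set equality.) -/
theorem minVecs_fAlpha_eq
    (F : Type*) [Field F] [NumberField F]
    (hreal : ∀ v : InfinitePlace F, v.IsReal)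
    (n : ℕ) (hn : 1 ≤ n)
    (α : F) (hα : ∀ σ : F →+* ℝ, 0 < σ α) :
    ∀ v : Fin n → RingOfIntegers F,
      IsMinVecF F n α v ↔
        ∃ η : RingOfIntegers F, IsMinVecPhi F α η ∧
          ((∃ i : Fin n, v = fun k => if k = i then η else 0) ∨
           (∃ i j : Fin n, i < j ∧
              v = fun k => if k = i then η else if k = j then -η else 0)) :=
  minVecs_fAlpha_eq_general F hreal n α hα
end

section
/- For every n ≥ 1, the positive lattice (ℤ^n, A_n) is of E-type: for every positive lattice (L',φ'), every minimal vector of the tensor product form A_n ⊗ φ' on ℤ^n ⊗_ℤ L' is a simple tensor u ⊗ v with u ∈ ℤ^n and v ∈ L'. -/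
open scoped TensorProduct

/-- The symmetric bilinear form of `A_n(x) = Σ_{1 ≤ i ≤ j ≤ n} x_i x_j` on `ℤⁿ`
(so `BAn n x x = A_n(x)`). -/
def BAn (n : ℕ) (x y : Fin n → ℤ) : ℚ :=
  (((∑ i, x i * y i) + (∑ i, x i) * (∑ i, y i) : ℤ) : ℚ) / 2

/-! Write `t = ∑ i ∈ s, eᵢ ⊗ vᵢ` with every `vᵢ ≠ 0`. Then
`2 S(t,t) = ∑ B'(vᵢ,vᵢ) + B'(∑ vᵢ, ∑ vᵢ)`, and testing minimality against `eᵢ ⊗ w` gives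
`S(t,t) ≤ B'(w,w)` for all `w ≠ 0`. Hence `#s · S(t,t) ≤ 2 S(t,t)`, so `#s ≤ 2`, and `#s = 2`
forces `∑ vᵢ = 0`. So `t` is `eᵢ ⊗ vᵢ` or `(eᵢ - eⱼ) ⊗ vᵢ`. -/

open Finset

lemma BAn_single_single (n : ℕ) (i j : Fin n) :
    BAn n (Pi.single i 1) (Pi.single j 1) = ((if i = j then 1 else 0) + 1) / 2 := by
  simp [BAn, Pi.single_apply, mul_ite, eq_comm]

lemma TensorProduct.exists_eq_sum_single_tmul {R ι N : Type*} [CommSemiring R] [Finite ι]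
    [DecidableEq ι] [AddCommMonoid N] [Module R N] (t : (ι → R) ⊗[R] N) :
    ∃ (s : Finset ι) (v : ι → N), (∀ i ∈ s, v i ≠ 0) ∧ t = ∑ i ∈ s, Pi.single i 1 ⊗ₜ[R] v i := by
  obtain ⟨c, rfl⟩ := TensorProduct.eq_repr_basis_left (Pi.basisFun R ι) t
  exact ⟨c.support, c, fun i => Finsupp.mem_support_iff.1, by simp [Finsupp.sum]⟩

lemma card_eq_one_or_card_eq_two_and_sum_eq_zero {ι L : Type*} [AddCommMonoid L] (q : L → ℚ)
    (hq_nonneg : ∀ w, 0 ≤ q w) (hq_pos : ∀ w, w ≠ 0 → 0 < q w) {m : ℚ}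
    (hm : ∀ w, w ≠ 0 → m ≤ q w) (s : Finset ι) (v : ι → L) (hv : ∀ i ∈ s, v i ≠ 0)
    (h : 2 * m = ∑ i ∈ s, q (v i) + q (∑ i ∈ s, v i)) :
    #s = 0 ∨ #s = 1 ∨ (#s = 2 ∧ ∑ i ∈ s, v i = 0) := by
  rcases s.eq_empty_or_nonempty with rfl | ⟨i₀, hi₀⟩
  · exact Or.inl card_empty
  have hq_sum := hq_nonneg (∑ i ∈ s, v i)
  have hm_pos : 0 < m := by
    have := sum_pos' (fun i _ => hq_nonneg (v i)) ⟨i₀, hi₀, hq_pos _ (hv i₀ hi₀)⟩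
    linarith
  have hcard : #s * m ≤ ∑ i ∈ s, q (v i) := by
    simpa [nsmul_eq_mul] using card_nsmul_le_sum s _ m fun i hi => hm _ (hv i hi)
  have hcard_le : #s ≤ 2 := by
    have : (#s : ℚ) * m ≤ 2 * m := by linarith
    exact_mod_cast le_of_mul_le_mul_right this hm_pos
  obtain h₀ | h₁ | h₂ : #s = 0 ∨ #s = 1 ∨ #s = 2 := by omega
  · exact Or.inl h₀
  · exact Or.inr (Or.inl h₁)
  · refine Or.inr (Or.inr ⟨h₂, ?_⟩)
    by_contra hne
    rw [h₂, Nat.cast_ofNat] at hcard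
    linarith [hq_pos _ hne]

section

variable {n : ℕ} {L' : Type*} [AddCommGroup L'] [Module ℤ L'] (B' : L' →ₗ[ℤ] L' →ₗ[ℤ] ℚ)
  {S : ((Fin n → ℤ) ⊗[ℤ] L') →ₗ[ℤ] ((Fin n → ℤ) ⊗[ℤ] L') →ₗ[ℤ] ℚ}

lemma two_mul_apply_sum_single_tmul
    (hS : ∀ (x : Fin n → ℤ) (v : L') (x' : Fin n → ℤ) (v' : L'),
      S (x ⊗ₜ[ℤ] v) (x' ⊗ₜ[ℤ] v') = BAn n x x' * B' v v')
    (s : Finset (Fin n)) (v : Fin n → L') :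
    2 * S (∑ i ∈ s, Pi.single i 1 ⊗ₜ v i) (∑ i ∈ s, Pi.single i 1 ⊗ₜ v i) =
      ∑ i ∈ s, B' (v i) (v i) + B' (∑ i ∈ s, v i) (∑ i ∈ s, v i) := by
  simp only [map_sum, LinearMap.sum_apply, hS, BAn_single_single, mul_sum]
  have hsplit : ∀ i j, 2 * (((if i = j then 1 else 0) + 1) / 2 * B' (v i) (v j)) =
      (if i = j then B' (v i) (v j) else 0) + B' (v i) (v j) := by
    intro i j; split_ifs <;> ring
  simp only [hsplit, sum_add_distrib]
  congr 1
  exact sum_congr rfl fun i hi => by rw [sum_ite_eq', if_pos hi]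

lemma apply_self_le_of_forall_le
    (hS : ∀ (x : Fin n → ℤ) (v : L') (x' : Fin n → ℤ) (v' : L'),
      S (x ⊗ₜ[ℤ] v) (x' ⊗ₜ[ℤ] v') = BAn n x x' * B' v v')
    (hB'pos : ∀ x : L', x ≠ 0 → 0 < B' x x) {t : (Fin n → ℤ) ⊗[ℤ] L'}
    (hmin : ∀ s : (Fin n → ℤ) ⊗[ℤ] L', s ≠ 0 → S t t ≤ S s s) (i : Fin n) {w : L'} (hw : w ≠ 0) :
    S t t ≤ B' w w := by
  have hSw : S (Pi.single i 1 ⊗ₜ w) (Pi.single i 1 ⊗ₜ w) = B' w w := by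
    simp [hS, BAn_single_single]
  refine hSw ▸ hmin _ fun h => (hB'pos w hw).ne' ?_
  rw [← hSw, h, map_zero]

end

theorem An_is_EType_general
    (n : ℕ)
    (L' : Type*) [AddCommGroup L'] [Module ℤ L']
    (B' : L' →ₗ[ℤ] L' →ₗ[ℤ] ℚ)
    (hB'pos : ∀ x : L', x ≠ 0 → 0 < B' x x)
    (S : ((Fin n → ℤ) ⊗[ℤ] L') →ₗ[ℤ] ((Fin n → ℤ) ⊗[ℤ] L') →ₗ[ℤ] ℚ)
    (hS : ∀ (x : Fin n → ℤ) (v : L') (x' : Fin n → ℤ) (v' : L'),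
      S (x ⊗ₜ[ℤ] v) (x' ⊗ₜ[ℤ] v') = BAn n x x' * B' v v')
    (t : (Fin n → ℤ) ⊗[ℤ] L') (ht : t ≠ 0)
    (hmin : ∀ s : (Fin n → ℤ) ⊗[ℤ] L', s ≠ 0 → S t t ≤ S s s) :
    ∃ (u : Fin n → ℤ) (v : L'), t = u ⊗ₜ[ℤ] v := by
  obtain ⟨s, v, hv, rfl⟩ := TensorProduct.exists_eq_sum_single_tmul t
  have hB'_nonneg (w : L') : 0 ≤ B' w w := by
    rcases eq_or_ne w 0 with rfl | hw
    · simp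
    · exact (hB'pos w hw).le
  obtain ⟨i₀, -⟩ : s.Nonempty := nonempty_iff_ne_empty.2 fun hs => ht (by rw [hs, sum_empty])
  rcases card_eq_one_or_card_eq_two_and_sum_eq_zero (fun w => B' w w) hB'_nonneg hB'pos
      (fun w hw => apply_self_le_of_forall_le B' hS hB'pos hmin i₀ hw) s v hv
      (two_mul_apply_sum_single_tmul B' hS s v) with h₀ | h₁ | ⟨h₂, hsum⟩
  · exact absurd (by rw [card_eq_zero.1 h₀, sum_empty]) ht
  · obtain ⟨i, rfl⟩ := card_eq_one.1 h₁
    exact ⟨_, _, sum_singleton _ _⟩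
  · obtain ⟨i, j, hij, rfl⟩ := card_eq_two.1 h₂
    rw [sum_pair hij] at hsum ⊢
    refine ⟨Pi.single i 1 - Pi.single j 1, v i, ?_⟩
    rw [eq_neg_of_add_eq_zero_right hsum, TensorProduct.tmul_neg, TensorProduct.sub_tmul,
      sub_eq_add_neg]

/-- For every `n ≥ 1`, the positive lattice `(ℤⁿ, A_n)` is of E-type: for every positive
lattice `(L', B')` and every bilinear form `S` on `ℤⁿ ⊗[ℤ] L'` satisfying
`S(x ⊗ v, x' ⊗ v') = B₂(x,x')·B'(v,v')` (where `B₂` is the bilinear form of `A_n`),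
every minimal vector of the quadratic form `t ↦ S t t` is a simple tensor. -/
theorem An_is_EType
    (n : ℕ) (hn : 1 ≤ n)
    (L' : Type*) [AddCommGroup L'] [Module ℤ L'] [Module.Free ℤ L'] [Module.Finite ℤ L']
    (B' : L' →ₗ[ℤ] L' →ₗ[ℤ] ℚ) (hB'symm : ∀ x y, B' x y = B' y x)
    (hB'pos : ∀ x : L', x ≠ 0 → 0 < B' x x)
    (S : ((Fin n → ℤ) ⊗[ℤ] L') →ₗ[ℤ] ((Fin n → ℤ) ⊗[ℤ] L') →ₗ[ℤ] ℚ)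
    (hS : ∀ (x : Fin n → ℤ) (v : L') (x' : Fin n → ℤ) (v' : L'),
      S (x ⊗ₜ[ℤ] v) (x' ⊗ₜ[ℤ] v') = BAn n x x' * B' v v')
    (t : (Fin n → ℤ) ⊗[ℤ] L') (ht : t ≠ 0)
    (hmin : ∀ s : (Fin n → ℤ) ⊗[ℤ] L', s ≠ 0 → S t t ≤ S s s) :
    ∃ (u : Fin n → ℤ) (v : L'), t = u ⊗ₜ[ℤ] v :=
  An_is_EType_general n L' B' hB'pos S hS t ht hmin
end

section
/- The form A_n is perfect: if X is a symmetric n×n matrix with rational entries such that v^t X v = 1 for every v in {e_1,…,e_n} ∪ {e_i − e_j : 1 ≤ i < j ≤ n} (where e_1,…,e_n is the standard basis of ℚ^n), then X_{ii} = 1 for all i and X_{ij} = 1/2 for all i ≠ j; i.e., X is the Gram matrix of A_n. -/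
/-!
Evaluating the form of `X` at `eᵢ` gives `Xᵢᵢ = 1`, and at `eᵢ - eⱼ` gives
`Xᵢᵢ - 2 Xᵢⱼ + Xⱼⱼ = 1` by symmetry, hence `Xᵢⱼ = 1/2`.
-/

open Matrix

section QuadraticValues

variable {ι R : Type*} [Fintype ι]

theorem sum_sum_mul_mul_eq_dotProduct_mulVec [CommSemiring R] (M : Matrix ι ι R) (v w : ι → R) :
    ∑ k, ∑ l, v k * M k l * w l = v ⬝ᵥ M *ᵥ w := by
  simp only [dotProduct, mulVec, Finset.mul_sum, mul_assoc]

variable [DecidableEq ι]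

theorem single_dotProduct_mulVec_single [CommSemiring R] (M : Matrix ι ι R) (i j : ι) :
    Pi.single i 1 ⬝ᵥ M *ᵥ Pi.single j 1 = M i j := by
  simp

theorem sub_single_dotProduct_mulVec_sub_single [CommRing R] (M : Matrix ι ι R) (i j : ι) :
    (Pi.single i 1 - Pi.single j 1) ⬝ᵥ M *ᵥ (Pi.single i 1 - Pi.single j 1) =
      M i i - M i j - M j i + M j j := by
  simp only [mulVec_sub, dotProduct_sub, sub_dotProduct, single_dotProduct_mulVec_single]
  ring

end QuadraticValues

theorem An_perfect_general
    (n : ℕ)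
    (X : Matrix (Fin n) (Fin n) ℚ) (hX : X.IsSymm)
    (h1 : ∀ i : Fin n,
      ∑ k, ∑ l, (Pi.single i 1 : Fin n → ℚ) k * X k l * (Pi.single i 1 : Fin n → ℚ) l = 1)
    (h2 : ∀ i j : Fin n, i < j →
      ∑ k, ∑ l, ((Pi.single i 1 - Pi.single j 1 : Fin n → ℚ) k) * X k l *
        ((Pi.single i 1 - Pi.single j 1 : Fin n → ℚ) l) = 1) :
    (∀ i, X i i = 1) ∧ ∀ i j, i ≠ j → X i j = 1 / 2 := by
  simp only [sum_sum_mul_mul_eq_dotProduct_mulVec, single_dotProduct_mulVec_single,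
    sub_single_dotProduct_mulVec_sub_single] at h1 h2
  have off_diag_of_lt : ∀ i j, i < j → X i j = 1 / 2 := by
    intro i j hij
    have h := h2 i j hij
    rw [h1 i, h1 j, hX.apply i j] at h
    linarith
  refine ⟨h1, fun i j hij => ?_⟩
  rcases hij.lt_or_gt with hlt | hgt
  · exact off_diag_of_lt i j hlt
  · rw [hX.apply j i, off_diag_of_lt j i hgt]

/-- The form `A_n` is perfect: if `X` is a symmetric `n × n` rational matrix with
`vᵗ X v = 1` for every `v ∈ {e₁,…,eₙ} ∪ {eᵢ - eⱼ : i < j}`, then `X` has diagonal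
entries `1` and off-diagonal entries `1/2`, i.e. `X` is the Gram matrix of `A_n`. -/
theorem An_perfect
    (n : ℕ) (hn : 1 ≤ n)
    (X : Matrix (Fin n) (Fin n) ℚ) (hX : X.IsSymm)
    (h1 : ∀ i : Fin n,
      ∑ k, ∑ l, (Pi.single i 1 : Fin n → ℚ) k * X k l * (Pi.single i 1 : Fin n → ℚ) l = 1)
    (h2 : ∀ i j : Fin n, i < j →
      ∑ k, ∑ l, ((Pi.single i 1 - Pi.single j 1 : Fin n → ℚ) k) * X k l *
        ((Pi.single i 1 - Pi.single j 1 : Fin n → ℚ) l) = 1) :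
    (∀ i, X i i = 1) ∧ ∀ i j, i ≠ j → X i j = 1 / 2 :=
  An_perfect_general n X hX h1 h2
end

section
/- For every n ≥ 1, the n(n+1)/2 rank-one symmetric matrices {v v^t : v ∈ {e_1,…,e_n} ∪ {e_i − e_j : 1 ≤ i < j ≤ n}} form a basis of the ℚ-vector space of symmetric n×n rational matrices; in particular, the minimal vectors of A_n impose n(n+1)/2 linearly independent linear conditions X ↦ v^t X v on symmetric matrices X. -/
/-!
The functionals `X ↦ ∑ⱼ Xᵢⱼ` (for `v = eᵢ`) and `X ↦ -Xᵢⱼ` (for `v = eᵢ - eⱼ`, `i < j`) form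
a dual family to the matrices `v vᵀ`: the row sums kill `(eᵢ - eⱼ)(eᵢ - eⱼ)ᵀ` because the
entries of `eᵢ - eⱼ` sum to zero, and the only `v vᵀ` with a nonzero entry at `(i, j)`, `i < j`,
is the one with `v = eᵢ - eⱼ`. Hence these matrices are linearly independent. They are
symmetric, and a symmetric matrix is determined by its entries on and above the diagonal, so
their number bounds the dimension of the symmetric matrices and they span them.
-/

def symMatrices (n : ℕ) : Submodule ℚ (Matrix (Fin n) (Fin n) ℚ) where
  carrier := {X | X.IsSymm}
  add_mem' := by
    intro a b ha hb
    simp only [Set.mem_setOf_eq, Matrix.IsSymm, Matrix.transpose_add] at *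
    rw [ha, hb]
  zero_mem' := by simp [Matrix.IsSymm]
  smul_mem' := by
    intro c X hX
    simp only [Set.mem_setOf_eq, Matrix.IsSymm, Matrix.transpose_smul] at *
    rw [hX]

/-- The minimal vectors of `A_n`, up to sign, indexed by pairs `i ≤ j`: for `i = j` the
standard basis vector `eᵢ`, and for `i < j` the vector `eᵢ - eⱼ`. -/
def minVec (n : ℕ) (p : {p : Fin n × Fin n // p.1 ≤ p.2}) : Fin n → ℚ :=
  if p.val.1 = p.val.2 then Pi.single p.val.1 1
  else Pi.single p.val.1 1 - Pi.single p.val.2 1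

open Matrix

theorem card_subtype_fst_le_snd (α : Type*) [Fintype α] [LinearOrder α] :
    Fintype.card {p : α × α // p.1 ≤ p.2} = Fintype.card α * (Fintype.card α + 1) / 2 := by
  rw [← Fintype.card_congr Sym2.sortEquiv, Sym2.card,
    Nat.choose_two_right, Nat.add_sub_cancel, Nat.mul_comm]

theorem Matrix.IsSymm.ext_of_le {α R : Type*} [LinearOrder α] {X Y : Matrix α α R}
    (hX : X.IsSymm) (hY : Y.IsSymm) (h : ∀ i j, i ≤ j → X i j = Y i j) : X = Y := by
  ext i j
  rcases le_total i j with hij | hji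
  · exact h i j hij
  · rw [← hX.apply i j, ← hY.apply i j, h j i hji]

section

variable {n : ℕ}

abbrev UpperPair (n : ℕ) := {p : Fin n × Fin n // p.1 ≤ p.2}

def upperEntries (n : ℕ) : Matrix (Fin n) (Fin n) ℚ →ₗ[ℚ] (UpperPair n → ℚ) where
  toFun X p := X p.1.1 p.1.2
  map_add' _ _ := rfl
  map_smul' _ _ := rfl

theorem injOn_upperEntries_symMatrices : Set.InjOn (upperEntries n) (symMatrices n) :=
  fun _ hX _ hY h => hX.ext_of_le hY fun i j hij => congrFun h ⟨(i, j), hij⟩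

theorem finrank_symMatrices_le :
    Module.finrank ℚ (symMatrices n) ≤ Fintype.card (UpperPair n) := by
  simpa using LinearMap.finrank_le_finrank_of_injective
    (f := upperEntries n ∘ₗ (symMatrices n).subtype)
    fun X Y h => Subtype.ext (injOn_upperEntries_symMatrices X.2 Y.2 h)

theorem vecMulVec_self_mem_symMatrices (v : Fin n → ℚ) : vecMulVec v v ∈ symMatrices n :=
  transpose_vecMulVec v v

theorem minVec_apply (p : UpperPair n) (a : Fin n) :
    minVec n p a =
      (if a = p.1.1 then 1 else 0) - (if a = p.1.2 ∧ p.1.1 ≠ p.1.2 then 1 else 0) := by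
  unfold minVec
  split_ifs <;> simp_all

theorem sum_minVec (p : UpperPair n) : ∑ a, minVec n p a = if p.1.1 = p.1.2 then 1 else 0 := by
  unfold minVec
  split_ifs <;> simp [Finset.sum_sub_distrib]

theorem vecMulVec_minVec_mulVec_one (p : UpperPair n) :
    vecMulVec (minVec n p) (minVec n p) *ᵥ 1 = if p.1.1 = p.1.2 then minVec n p else 0 := by
  rw [vecMulVec_mulVec, dotProduct_one, sum_minVec]
  split_ifs <;> simp

def minVecCoords (n : ℕ) : Matrix (Fin n) (Fin n) ℚ →ₗ[ℚ] (UpperPair n → ℚ) where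
  toFun X p := if p.1.1 = p.1.2 then (X *ᵥ 1) p.1.1 else -X p.1.1 p.1.2
  map_add' X Y := by ext p; dsimp only [Pi.add_apply]; split_ifs <;> simp [add_mulVec]; ring
  map_smul' c X := by
    ext p; dsimp only [Pi.smul_apply, RingHom.id_apply]; split_ifs <;> simp [smul_mulVec]

theorem minVecCoords_vecMulVec_minVec (p : UpperPair n) :
    minVecCoords n (vecMulVec (minVec n p) (minVec n p)) = Pi.single p 1 := by
  ext ⟨⟨i, j⟩, hij⟩
  obtain ⟨⟨k, l⟩, hkl⟩ := p
  simp only [minVecCoords, LinearMap.coe_mk, AddHom.coe_mk, vecMulVec_minVec_mulVec_one,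
    ite_apply, Pi.zero_apply, vecMulVec_apply, minVec_apply, Pi.single_apply, Subtype.ext_iff,
    Prod.ext_iff]
  split_ifs <;> grind

theorem linearIndependent_vecMulVec_minVec :
    LinearIndependent ℚ fun p : UpperPair n => vecMulVec (minVec n p) (minVec n p) := by
  refine LinearIndependent.of_comp (minVecCoords n) ?_
  simpa only [Function.comp_def, minVecCoords_vecMulVec_minVec] using
    Pi.linearIndependent_single_one (UpperPair n) ℚ

theorem span_vecMulVec_minVec :
    Submodule.span ℚ (Set.range fun p : UpperPair n => vecMulVec (minVec n p) (minVec n p)) =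
      symMatrices n := by
  refine Submodule.eq_of_le_of_finrank_le ?_ ?_
  · exact Submodule.span_le.2 (Set.range_subset_iff.2 fun p => vecMulVec_self_mem_symMatrices _)
  · rw [finrank_span_eq_card linearIndependent_vecMulVec_minVec]
    exact finrank_symMatrices_le

end

theorem minVecs_vecMulVec_basis_general (n : ℕ) :
    Nat.card {p : Fin n × Fin n // p.1 ≤ p.2} = n * (n + 1) / 2 ∧
    LinearIndependent ℚ (fun p : {p : Fin n × Fin n // p.1 ≤ p.2} =>
      Matrix.vecMulVec (minVec n p) (minVec n p)) ∧
    Submodule.span ℚ (Set.range (fun p : {p : Fin n × Fin n // p.1 ≤ p.2} =>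
      Matrix.vecMulVec (minVec n p) (minVec n p))) = symMatrices n := by
  refine ⟨?_, linearIndependent_vecMulVec_minVec, span_vecMulVec_minVec⟩
  rw [Nat.card_eq_fintype_card, card_subtype_fst_le_snd, Fintype.card_fin]

/-- For every `n ≥ 1`, the `n(n+1)/2` rank-one symmetric matrices `v vᵗ`, where `v` runs
over the minimal vectors `{eᵢ} ∪ {eᵢ - eⱼ : i < j}` of `A_n`, form a basis of the
ℚ-vector space of symmetric `n × n` rational matrices: they are linearly independent and
span the symmetric matrices.  In particular the minimal vectors of `A_n` impose
`n(n+1)/2` linearly independent conditions `X ↦ vᵗ X v` on symmetric matrices. -/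
theorem minVecs_vecMulVec_basis (n : ℕ) (hn : 1 ≤ n) :
    Nat.card {p : Fin n × Fin n // p.1 ≤ p.2} = n * (n + 1) / 2 ∧
    LinearIndependent ℚ (fun p : {p : Fin n × Fin n // p.1 ≤ p.2} =>
      Matrix.vecMulVec (minVec n p) (minVec n p)) ∧
    Submodule.span ℚ (Set.range (fun p : {p : Fin n × Fin n // p.1 ≤ p.2} =>
      Matrix.vecMulVec (minVec n p) (minVec n p))) = symMatrices n :=
  minVecs_vecMulVec_basis_general n
end
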